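/- Let R ∈ ℝ^{n×n} have all entries in (0,1], let (x*,y*) be a Nash equilibrium of the associated zero-sum game, fix ε > 0 and η ∈ (0, 1/2], and let (x,y) be a fully mixed profile that is NOT an ε-Nash equilibrium. Then there exists ξ₀ > 0 such that for every ξ ≥ ξ₀, the profile (x',y') produced by one FLBR-MWU step from (x,y) with parameters η and ξ satisfies D_KL((x*,y*)||(x',y')) ≤ D_KL((x*,y*)||(x,y)) − (ηε − 4η²). -/
import Mathlib


open Finset Real Filter

/-- A probability vector (mixed strategy) on `Fin n`. -/
def IsProbVec {n : ℕ} (x : Fin n → ℝ) : Prop := (∀ i, 0 ≤ x i) ∧ ∑ i, x i = 1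

/-- A fully mixed strategy: all coordinates strictly positive. -/
def FullyMixed {n : ℕ} (x : Fin n → ℝ) : Prop := ∀ i, 0 < x i

/-- Expected payoff of the row player, `xᵀ R y`. -/
def payoff {n : ℕ} (R : Matrix (Fin n) (Fin n) ℝ) (x y : Fin n → ℝ) : ℝ :=
  ∑ i, ∑ j, x i * R i j * y j

/-- `e_iᵀ R y`, the payoff of pure row strategy `i` against `y`. -/
def rowPayoff {n : ℕ} (R : Matrix (Fin n) (Fin n) ℝ) (y : Fin n → ℝ) (i : Fin n) : ℝ :=
  ∑ j, R i j * y j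

/-- `xᵀ R e_j`, the (row player's) payoff when the column player plays pure strategy `j`. -/
def colPayoff {n : ℕ} (R : Matrix (Fin n) (Fin n) ℝ) (x : Fin n → ℝ) (j : Fin n) : ℝ :=
  ∑ i, x i * R i j

/-- `(x, y)` is a Nash equilibrium of the zero-sum game with payoff matrix `R`. -/
def IsNash {n : ℕ} (R : Matrix (Fin n) (Fin n) ℝ) (x y : Fin n → ℝ) : Prop :=
  IsProbVec x ∧ IsProbVec y ∧ (∀ i, rowPayoff R y i ≤ payoff R x y) ∧
    (∀ j, payoff R x y ≤ colPayoff R x j)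

/-- `(x, y)` is an `ε`-Nash equilibrium. -/
def IsEpsNash {n : ℕ} (R : Matrix (Fin n) (Fin n) ℝ) (x y : Fin n → ℝ) (ε : ℝ) : Prop :=
  (∀ i, rowPayoff R y i ≤ payoff R x y + ε) ∧ (∀ j, payoff R x y - ε ≤ colPayoff R x j)

/-- Intermediate (IBR) strategy of the row player:
`x̂ᵢ = xᵢ e^{ξ (Ry)ᵢ} / ∑ⱼ xⱼ e^{ξ (Ry)ⱼ}`. -/
noncomputable def brX {n : ℕ} (ξ : ℝ) (R : Matrix (Fin n) (Fin n) ℝ) (x y : Fin n → ℝ) :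
    Fin n → ℝ :=
  fun i => x i * Real.exp (ξ * rowPayoff R y i) / ∑ j, x j * Real.exp (ξ * rowPayoff R y j)

/-- Intermediate (IBR) strategy of the column player:
`ŷⱼ = yⱼ e^{-ξ (Rᵀx)ⱼ} / ∑ₖ yₖ e^{-ξ (Rᵀx)ₖ}`. -/
noncomputable def brY {n : ℕ} (ξ : ℝ) (R : Matrix (Fin n) (Fin n) ℝ) (x y : Fin n → ℝ) :
    Fin n → ℝ :=
  fun j => y j * Real.exp (-(ξ * colPayoff R x j)) / ∑ k, y k * Real.exp (-(ξ * colPayoff R x k))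

/-- Multiplicative-weights update of the row player against the (intermediate) strategy `yh`. -/
noncomputable def mwuX {n : ℕ} (η : ℝ) (R : Matrix (Fin n) (Fin n) ℝ) (x yh : Fin n → ℝ) :
    Fin n → ℝ :=
  fun i => x i * Real.exp (η * rowPayoff R yh i) / ∑ j, x j * Real.exp (η * rowPayoff R yh j)

/-- Multiplicative-weights update of the column player against the (intermediate) strategy `xh`. -/
noncomputable def mwuY {n : ℕ} (η : ℝ) (R : Matrix (Fin n) (Fin n) ℝ) (y xh : Fin n → ℝ) :
    Fin n → ℝ :=
  fun j => y j * Real.exp (-(η * colPayoff R xh j)) / ∑ k, y k * Real.exp (-(η * colPayoff R xh k))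

/-- One full step of the FLBR-MWU dynamics with update rate `η` and intermediate rate `ξ`. -/
noncomputable def flbrStep {n : ℕ} (η ξ : ℝ) (R : Matrix (Fin n) (Fin n) ℝ)
    (p : (Fin n → ℝ) × (Fin n → ℝ)) : (Fin n → ℝ) × (Fin n → ℝ) :=
  (mwuX η R p.1 (brY ξ R p.1 p.2), mwuY η R p.2 (brX ξ R p.1 p.2))

/-- Kullback–Leibler divergence `∑ᵢ xsᵢ ln(xsᵢ / xᵢ)` (with the convention `0 · ln 0 = 0`). -/
noncomputable def klDiv {n : ℕ} (xs x : Fin n → ℝ) : ℝ := ∑ i, xs i * Real.log (xs i / x i)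

/-- KL divergence of the profile `(x, y)` from `(xs, ys)`. -/
noncomputable def klProfile {n : ℕ} (xs ys x y : Fin n → ℝ) : ℝ := klDiv xs x + klDiv ys y

section FLBRAux

open Finset Real

variable {n : ℕ}

private lemma exp_le_quad' {t : ℝ} (ht : |t| ≤ 1) : Real.exp t ≤ 1 + t + t ^ 2 := by
  have h := Real.exp_bound ht (n := 2) (by norm_num)
  have h2 : ∑ m ∈ range 2, t ^ m / m.factorial = 1 + t := by
    simp [Finset.sum_range_succ]
  rw [h2, sq_abs] at h
  have h3 := (abs_sub_le_iff.1 h).1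
  norm_num [Nat.factorial] at h3
  nlinarith [sq_nonneg t]

private lemma gibbs_kl (p x t : Fin n → ℝ) (hp0 : ∀ i, 0 ≤ p i) (hp1 : ∑ i, p i = 1)
    (hx : ∀ i, 0 < x i) (hx1 : ∑ i, x i = 1)
    (ht1 : ∀ i, |t i| ≤ 1) (B : ℝ) (htB : ∀ i, t i ^ 2 ≤ B) :
    (∑ i, p i * Real.log (p i / (x i * Real.exp (t i) / ∑ j, x j * Real.exp (t j))))
      ≤ (∑ i, p i * Real.log (p i / x i)) - ∑ i, p i * t i + ∑ i, x i * t i + B := by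
  have hn : (Finset.univ : Finset (Fin n)).Nonempty := by
    by_contra h
    simp only [Finset.not_nonempty_iff_eq_empty] at h
    rw [Finset.sum_congr h (fun _ _ => rfl)] at hx1
    simp at hx1
  have hZ : 0 < ∑ j, x j * Real.exp (t j) :=
    Finset.sum_pos (fun j _ => mul_pos (hx j) (Real.exp_pos _)) hn
  set Z := ∑ j, x j * Real.exp (t j) with hZdef
  have key : ∀ i, p i * Real.log (p i / (x i * Real.exp (t i) / Z))
      = p i * Real.log (p i / x i) + p i * (Real.log Z - t i) := by
    intro i
    rcases eq_or_lt_of_le (hp0 i) with h0 | h0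
    · simp [← h0]
    · have hxi := hx i
      have hexp := Real.exp_pos (t i)
      rw [div_div_eq_mul_div, Real.log_div (by positivity) (by positivity),
        Real.log_mul h0.ne' hZ.ne', Real.log_mul hxi.ne' hexp.ne',
        Real.log_exp, Real.log_div h0.ne' hxi.ne']
      ring
  rw [Finset.sum_congr rfl (fun i _ => key i)]
  rw [Finset.sum_add_distrib]
  have hsplit : ∑ i, p i * (Real.log Z - t i) = Real.log Z - ∑ i, p i * t i := by
    rw [Finset.sum_congr rfl (fun i _ => mul_sub (p i) (Real.log Z) (t i)),
      Finset.sum_sub_distrib, ← Finset.sum_mul, hp1, one_mul]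
  rw [hsplit]
  have hZle : Z ≤ 1 + (∑ i, x i * t i) + B := by
    have h1 : Z ≤ ∑ i, x i * (1 + t i + t i ^ 2) := by
      apply Finset.sum_le_sum
      intro i _
      exact mul_le_mul_of_nonneg_left (exp_le_quad' (ht1 i)) (hx i).le
    have h2 : ∑ i, x i * (1 + t i + t i ^ 2)
        = 1 + (∑ i, x i * t i) + ∑ i, x i * t i ^ 2 := by
      simp only [mul_add, Finset.sum_add_distrib, mul_one, hx1]
    have h3 : ∑ i, x i * t i ^ 2 ≤ B := by
      calc ∑ i, x i * t i ^ 2 ≤ ∑ i, x i * B :=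
            Finset.sum_le_sum (fun i _ => mul_le_mul_of_nonneg_left (htB i) (hx i).le)
        _ = B := by rw [← Finset.sum_mul, hx1, one_mul]
    linarith
  have hlog : Real.log Z ≤ (∑ i, x i * t i) + B := by
    have := Real.log_le_sub_one_of_pos hZ
    linarith
  linarith

private lemma cheb_le (x g w : Fin n → ℝ) (hx0 : ∀ i, 0 ≤ x i) (hx1 : ∑ i, x i = 1)
    (hw : ∀ i, 0 < w i) (hmono : ∀ i j, 0 ≤ (g i - g j) * (w i - w j)) :
    (∑ i, x i * g i) ≤ (∑ i, x i * w i * g i) / (∑ i, x i * w i) := by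
  have hex : ∃ i, 0 < x i := by
    by_contra h
    push_neg at h
    have : ∑ i, x i = 0 := Finset.sum_eq_zero (fun i _ => le_antisymm (h i) (hx0 i))
    rw [this] at hx1; norm_num at hx1
  obtain ⟨i1, hi1⟩ := hex
  have hZ : 0 < ∑ i, x i * w i :=
    Finset.sum_pos' (fun i _ => mul_nonneg (hx0 i) (hw i).le)
      ⟨i1, Finset.mem_univ i1, mul_pos hi1 (hw i1)⟩
  rw [le_div_iff₀ hZ]
  have hT : 0 ≤ ∑ i, ∑ j, x i * x j * ((g i - g j) * (w i - w j)) :=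
    Finset.sum_nonneg fun i _ => Finset.sum_nonneg fun j _ =>
      mul_nonneg (mul_nonneg (hx0 i) (hx0 j)) (hmono i j)
  have key : ∑ i, ∑ j, x i * x j * ((g i - g j) * (w i - w j))
      = 2 * (∑ i, x i * w i * g i) * (∑ i, x i) - 2 * (∑ i, x i * g i) * (∑ i, x i * w i) := by
    have e1 : ∀ i j : Fin n, x i * x j * ((g i - g j) * (w i - w j))
        = x i * w i * g i * x j + x i * (x j * w j * g j)
          - x i * g i * (x j * w j) - x i * w i * (x j * g j) := by
      intros; ring
    simp only [e1, Finset.sum_add_distrib, Finset.sum_sub_distrib,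
      ← Finset.sum_mul, ← Finset.mul_sum]
    ring
  rw [hx1] at key
  nlinarith

private lemma softmax_lb (x G : Fin n → ℝ) (hx : ∀ i, 0 < x i) (hx1 : ∑ i, x i = 1)
    (hG : ∀ i, 0 ≤ G i ∧ G i ≤ 1) (i0 : Fin n) (δ ξ : ℝ) (hδ : 0 < δ) (hξ0 : 0 ≤ ξ)
    (hcond : Real.exp (-(ξ * δ)) ≤ x i0 * δ) :
    G i0 - δ ≤ (∑ i, x i * Real.exp (ξ * G i) * G i) / (∑ i, x i * Real.exp (ξ * G i)) := by
  have hne : (Finset.univ : Finset (Fin n)).Nonempty := ⟨i0, Finset.mem_univ i0⟩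
  have hZ : 0 < ∑ i, x i * Real.exp (ξ * G i) :=
    Finset.sum_pos (fun i _ => mul_pos (hx i) (Real.exp_pos _)) hne
  rw [le_div_iff₀ hZ]
  have hgoal : 0 ≤ ∑ i, x i * Real.exp (ξ * G i) * (G i - G i0 + δ) := by
    have hsplit : x i0 * Real.exp (ξ * G i0) * (G i0 - G i0 + δ)
        + ∑ i ∈ Finset.univ.erase i0, x i * Real.exp (ξ * G i) * (G i - G i0 + δ)
        = ∑ i, x i * Real.exp (ξ * G i) * (G i - G i0 + δ) :=
      Finset.add_sum_erase Finset.univ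
        (fun i => x i * Real.exp (ξ * G i) * (G i - G i0 + δ)) (Finset.mem_univ i0)
    have hpt : ∀ i ∈ Finset.univ.erase i0,
        -(x i * Real.exp (ξ * (G i0 - δ))) ≤ x i * Real.exp (ξ * G i) * (G i - G i0 + δ) := by
      intro i _
      rcases le_or_gt (G i0 - δ) (G i) with h | h
      · have h1 : 0 ≤ x i * Real.exp (ξ * G i) * (G i - G i0 + δ) :=
          mul_nonneg (mul_pos (hx i) (Real.exp_pos _)).le (by linarith)
        have h2 : 0 ≤ x i * Real.exp (ξ * (G i0 - δ)) :=
          (mul_pos (hx i) (Real.exp_pos _)).le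
        linarith
      · have hle : Real.exp (ξ * G i) ≤ Real.exp (ξ * (G i0 - δ)) :=
          Real.exp_le_exp.2 (mul_le_mul_of_nonneg_left h.le hξ0)
        have h1 : -1 ≤ G i - G i0 + δ := by
          have := (hG i).1; have := (hG i0).2; linarith
        have h2 : G i - G i0 + δ ≤ 0 := by linarith
        have s1 : x i * Real.exp (ξ * (G i0 - δ)) * (G i - G i0 + δ)
            ≤ x i * Real.exp (ξ * G i) * (G i - G i0 + δ) :=
          mul_le_mul_of_nonpos_right (mul_le_mul_of_nonneg_left hle (hx i).le) h2
        have s2 : x i * Real.exp (ξ * (G i0 - δ)) * (-1)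
            ≤ x i * Real.exp (ξ * (G i0 - δ)) * (G i - G i0 + δ) :=
          mul_le_mul_of_nonneg_left h1 (mul_pos (hx i) (Real.exp_pos _)).le
        linarith
    have hsum2 : ∑ i ∈ Finset.univ.erase i0, -(x i * Real.exp (ξ * (G i0 - δ)))
        ≤ ∑ i ∈ Finset.univ.erase i0, x i * Real.exp (ξ * G i) * (G i - G i0 + δ) :=
      Finset.sum_le_sum hpt
    have hxsub : ∑ i ∈ Finset.univ.erase i0, x i ≤ 1 := by
      rw [← hx1]
      exact Finset.sum_le_sum_of_subset_of_nonneg (Finset.erase_subset _ _)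
        (fun i _ _ => (hx i).le)
    have hneg : ∑ i ∈ Finset.univ.erase i0, -(x i * Real.exp (ξ * (G i0 - δ)))
        = -(Real.exp (ξ * (G i0 - δ)) * ∑ i ∈ Finset.univ.erase i0, x i) := by
      rw [Finset.mul_sum, ← Finset.sum_neg_distrib]
      exact Finset.sum_congr rfl (fun i _ => by ring)
    have hEbound : Real.exp (ξ * (G i0 - δ)) ≤ Real.exp (ξ * G i0) * (x i0 * δ) := by
      have hfac : Real.exp (ξ * (G i0 - δ)) = Real.exp (ξ * G i0) * Real.exp (-(ξ * δ)) := by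
        rw [← Real.exp_add]; ring_nf
      rw [hfac]
      exact mul_le_mul_of_nonneg_left hcond (Real.exp_pos _).le
    have hxsubnn : 0 ≤ ∑ i ∈ Finset.univ.erase i0, x i :=
      Finset.sum_nonneg (fun i _ => (hx i).le)
    have h9 : Real.exp (ξ * (G i0 - δ)) * (∑ i ∈ Finset.univ.erase i0, x i)
        ≤ Real.exp (ξ * G i0) * (x i0 * δ) * 1 :=
      mul_le_mul hEbound hxsub hxsubnn (mul_pos (Real.exp_pos _) (mul_pos (hx i0) hδ)).le
    have hi0term : x i0 * Real.exp (ξ * G i0) * (G i0 - G i0 + δ)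
        = Real.exp (ξ * G i0) * (x i0 * δ) * 1 := by ring
    linarith
  have expand : ∑ i, x i * Real.exp (ξ * G i) * (G i - G i0 + δ)
      = (∑ i, x i * Real.exp (ξ * G i) * G i)
        - (G i0 - δ) * ∑ i, x i * Real.exp (ξ * G i) := by
    rw [Finset.mul_sum, ← Finset.sum_sub_distrib]
    exact Finset.sum_congr rfl (fun i _ => by ring)
  linarith [expand ▸ hgoal]

private lemma softmin_ub (y c : Fin n → ℝ) (hy : ∀ j, 0 < y j) (hy1 : ∑ j, y j = 1)
    (hc : ∀ j, 0 ≤ c j ∧ c j ≤ 1) (j0 : Fin n) (δ ξ : ℝ) (hδ : 0 < δ) (hξ0 : 0 ≤ ξ)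
    (hcond : Real.exp (-(ξ * δ)) ≤ y j0 * δ) :
    (∑ j, y j * Real.exp (-(ξ * c j)) * c j) / (∑ j, y j * Real.exp (-(ξ * c j))) ≤ c j0 + δ := by
  have hne : (Finset.univ : Finset (Fin n)).Nonempty := ⟨j0, Finset.mem_univ j0⟩
  have hZ : 0 < ∑ j, y j * Real.exp (-(ξ * c j)) :=
    Finset.sum_pos (fun j _ => mul_pos (hy j) (Real.exp_pos _)) hne
  rw [div_le_iff₀ hZ]
  have hgoal : ∑ j, y j * Real.exp (-(ξ * c j)) * (c j - c j0 - δ) ≤ 0 := by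
    have hsplit : y j0 * Real.exp (-(ξ * c j0)) * (c j0 - c j0 - δ)
        + ∑ j ∈ Finset.univ.erase j0, y j * Real.exp (-(ξ * c j)) * (c j - c j0 - δ)
        = ∑ j, y j * Real.exp (-(ξ * c j)) * (c j - c j0 - δ) :=
      Finset.add_sum_erase Finset.univ
        (fun j => y j * Real.exp (-(ξ * c j)) * (c j - c j0 - δ)) (Finset.mem_univ j0)
    have hpt : ∀ j ∈ Finset.univ.erase j0,
        y j * Real.exp (-(ξ * c j)) * (c j - c j0 - δ)
          ≤ y j * Real.exp (-(ξ * (c j0 + δ))) := by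
      intro j _
      rcases le_or_gt (c j) (c j0 + δ) with h | h
      · have h1 : y j * Real.exp (-(ξ * c j)) * (c j - c j0 - δ) ≤ 0 :=
          mul_nonpos_of_nonneg_of_nonpos (mul_pos (hy j) (Real.exp_pos _)).le (by linarith)
        have h2 : 0 ≤ y j * Real.exp (-(ξ * (c j0 + δ))) :=
          (mul_pos (hy j) (Real.exp_pos _)).le
        linarith
      · have hle : Real.exp (-(ξ * c j)) ≤ Real.exp (-(ξ * (c j0 + δ))) := by
          apply Real.exp_le_exp.2
          have := mul_le_mul_of_nonneg_left h.le hξ0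
          linarith
        have h1 : c j - c j0 - δ ≤ 1 := by
          have := (hc j).2; have := (hc j0).1; linarith
        have hd : 0 ≤ c j - c j0 - δ := by linarith
        have s1 : y j * Real.exp (-(ξ * c j)) * (c j - c j0 - δ)
            ≤ y j * Real.exp (-(ξ * (c j0 + δ))) * (c j - c j0 - δ) :=
          mul_le_mul_of_nonneg_right (mul_le_mul_of_nonneg_left hle (hy j).le) hd
        have s2 : y j * Real.exp (-(ξ * (c j0 + δ))) * (c j - c j0 - δ)
            ≤ y j * Real.exp (-(ξ * (c j0 + δ))) * 1 :=
          mul_le_mul_of_nonneg_left h1 (mul_pos (hy j) (Real.exp_pos _)).le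
        linarith
    have hsum2 : ∑ j ∈ Finset.univ.erase j0, y j * Real.exp (-(ξ * c j)) * (c j - c j0 - δ)
        ≤ ∑ j ∈ Finset.univ.erase j0, y j * Real.exp (-(ξ * (c j0 + δ))) :=
      Finset.sum_le_sum hpt
    have hysub : ∑ j ∈ Finset.univ.erase j0, y j ≤ 1 := by
      rw [← hy1]
      exact Finset.sum_le_sum_of_subset_of_nonneg (Finset.erase_subset _ _)
        (fun j _ _ => (hy j).le)
    have hysubnn : 0 ≤ ∑ j ∈ Finset.univ.erase j0, y j :=
      Finset.sum_nonneg (fun j _ => (hy j).le)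
    have hpos : ∑ j ∈ Finset.univ.erase j0, y j * Real.exp (-(ξ * (c j0 + δ)))
        = Real.exp (-(ξ * (c j0 + δ))) * ∑ j ∈ Finset.univ.erase j0, y j := by
      rw [Finset.mul_sum]
      exact Finset.sum_congr rfl (fun j _ => by ring)
    have hEbound : Real.exp (-(ξ * (c j0 + δ))) ≤ Real.exp (-(ξ * c j0)) * (y j0 * δ) := by
      have hfac : Real.exp (-(ξ * (c j0 + δ)))
          = Real.exp (-(ξ * c j0)) * Real.exp (-(ξ * δ)) := by
        rw [← Real.exp_add]; ring_nf
      rw [hfac]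
      exact mul_le_mul_of_nonneg_left hcond (Real.exp_pos _).le
    have h9 : Real.exp (-(ξ * (c j0 + δ))) * (∑ j ∈ Finset.univ.erase j0, y j)
        ≤ Real.exp (-(ξ * c j0)) * (y j0 * δ) * 1 :=
      mul_le_mul hEbound hysub hysubnn (mul_pos (Real.exp_pos _) (mul_pos (hy j0) hδ)).le
    have hj0term : y j0 * Real.exp (-(ξ * c j0)) * (c j0 - c j0 - δ)
        = -(Real.exp (-(ξ * c j0)) * (y j0 * δ) * 1) := by ring
    linarith
  have expand : ∑ j, y j * Real.exp (-(ξ * c j)) * (c j - c j0 - δ)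
      = (∑ j, y j * Real.exp (-(ξ * c j)) * c j)
        - (c j0 + δ) * ∑ j, y j * Real.exp (-(ξ * c j)) := by
    rw [Finset.mul_sum, ← Finset.sum_sub_distrib]
    exact Finset.sum_congr rfl (fun j _ => by ring)
  linarith [expand ▸ hgoal]

private lemma payoff_eq_row (R : Matrix (Fin n) (Fin n) ℝ) (a b : Fin n → ℝ) :
    payoff R a b = ∑ i, a i * rowPayoff R b i := by
  unfold payoff rowPayoff
  refine Finset.sum_congr rfl fun i _ => ?_
  rw [Finset.mul_sum]
  exact Finset.sum_congr rfl fun j _ => by ring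

private lemma payoff_eq_col (R : Matrix (Fin n) (Fin n) ℝ) (a b : Fin n → ℝ) :
    payoff R a b = ∑ j, b j * colPayoff R a j := by
  unfold payoff colPayoff
  rw [Finset.sum_comm]
  refine Finset.sum_congr rfl fun j _ => ?_
  rw [Finset.mul_sum]
  exact Finset.sum_congr rfl fun i _ => by ring

private lemma rowPayoff_mem (R : Matrix (Fin n) (Fin n) ℝ) (hR : ∀ i j, 0 < R i j ∧ R i j ≤ 1)
    (b : Fin n → ℝ) (hb : IsProbVec b) (i : Fin n) :
    0 ≤ rowPayoff R b i ∧ rowPayoff R b i ≤ 1 := by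
  constructor
  · exact Finset.sum_nonneg fun j _ => mul_nonneg (hR i j).1.le (hb.1 j)
  · calc rowPayoff R b i ≤ ∑ j, b j :=
        Finset.sum_le_sum fun j _ => by
          have := (hR i j).2; have := hb.1 j; nlinarith
      _ = 1 := hb.2

private lemma colPayoff_mem (R : Matrix (Fin n) (Fin n) ℝ) (hR : ∀ i j, 0 < R i j ∧ R i j ≤ 1)
    (a : Fin n → ℝ) (ha : IsProbVec a) (j : Fin n) :
    0 ≤ colPayoff R a j ∧ colPayoff R a j ≤ 1 := by
  constructor
  · exact Finset.sum_nonneg fun i _ => mul_nonneg (ha.1 i) (hR i j).1.le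
  · calc colPayoff R a j ≤ ∑ i, a i :=
        Finset.sum_le_sum fun i _ => by
          have := (hR i j).2; have := ha.1 i; nlinarith
      _ = 1 := ha.2

private lemma univ_nonempty_of_prob {x : Fin n → ℝ} (hx : IsProbVec x) :
    (Finset.univ : Finset (Fin n)).Nonempty := by
  by_contra h
  simp only [Finset.not_nonempty_iff_eq_empty] at h
  have := hx.2
  rw [Finset.sum_congr h (fun _ _ => rfl)] at this
  simp at this

private lemma brX_prob (ξ : ℝ) (R : Matrix (Fin n) (Fin n) ℝ) (x y : Fin n → ℝ)
    (hx : IsProbVec x) (hxm : FullyMixed x) :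
    IsProbVec (brX ξ R x y) ∧ FullyMixed (brX ξ R x y) := by
  have hZ : 0 < ∑ j, x j * Real.exp (ξ * rowPayoff R y j) :=
    Finset.sum_pos (fun j _ => mul_pos (hxm j) (Real.exp_pos _)) (univ_nonempty_of_prob hx)
  have hpos : ∀ i, 0 < brX ξ R x y i := fun i =>
    div_pos (mul_pos (hxm i) (Real.exp_pos _)) hZ
  refine ⟨⟨fun i => (hpos i).le, ?_⟩, hpos⟩
  unfold brX
  rw [← Finset.sum_div, div_self hZ.ne']

private lemma brY_prob (ξ : ℝ) (R : Matrix (Fin n) (Fin n) ℝ) (x y : Fin n → ℝ)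
    (hy : IsProbVec y) (hym : FullyMixed y) :
    IsProbVec (brY ξ R x y) ∧ FullyMixed (brY ξ R x y) := by
  have hZ : 0 < ∑ k, y k * Real.exp (-(ξ * colPayoff R x k)) :=
    Finset.sum_pos (fun k _ => mul_pos (hym k) (Real.exp_pos _)) (univ_nonempty_of_prob hy)
  have hpos : ∀ j, 0 < brY ξ R x y j := fun j =>
    div_pos (mul_pos (hym j) (Real.exp_pos _)) hZ
  refine ⟨⟨fun j => (hpos j).le, ?_⟩, hpos⟩
  unfold brY
  rw [← Finset.sum_div, div_self hZ.ne']

private lemma payoff_brX_val (ξ : ℝ) (R : Matrix (Fin n) (Fin n) ℝ) (x y : Fin n → ℝ) :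
    payoff R (brX ξ R x y) y
      = (∑ i, x i * Real.exp (ξ * rowPayoff R y i) * rowPayoff R y i)
        / (∑ i, x i * Real.exp (ξ * rowPayoff R y i)) := by
  rw [payoff_eq_row, Finset.sum_div]
  exact Finset.sum_congr rfl fun i _ => by unfold brX; rw [div_mul_eq_mul_div]

private lemma payoff_brY_val (ξ : ℝ) (R : Matrix (Fin n) (Fin n) ℝ) (x y : Fin n → ℝ) :
    payoff R x (brY ξ R x y)
      = (∑ j, y j * Real.exp (-(ξ * colPayoff R x j)) * colPayoff R x j)
        / (∑ j, y j * Real.exp (-(ξ * colPayoff R x j))) := by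
  rw [payoff_eq_col, Finset.sum_div]
  exact Finset.sum_congr rfl fun j _ => by unfold brY; rw [div_mul_eq_mul_div]

private lemma payoff_brX_ge (ξ : ℝ) (hξ : 0 ≤ ξ) (R : Matrix (Fin n) (Fin n) ℝ)
    (x y : Fin n → ℝ) (hx : IsProbVec x) :
    payoff R x y ≤ payoff R (brX ξ R x y) y := by
  rw [payoff_brX_val, payoff_eq_row]
  apply cheb_le x (rowPayoff R y) (fun i => Real.exp (ξ * rowPayoff R y i)) hx.1 hx.2
    (fun i => Real.exp_pos _)
  intro i j
  rcases le_total (rowPayoff R y i) (rowPayoff R y j) with h | h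
  · have := Real.exp_le_exp.2 (mul_le_mul_of_nonneg_left h hξ)
    nlinarith
  · have := Real.exp_le_exp.2 (mul_le_mul_of_nonneg_left h hξ)
    nlinarith

private lemma payoff_brY_le (ξ : ℝ) (hξ : 0 ≤ ξ) (R : Matrix (Fin n) (Fin n) ℝ)
    (x y : Fin n → ℝ) (hy : IsProbVec y) :
    payoff R x (brY ξ R x y) ≤ payoff R x y := by
  rw [payoff_brY_val, payoff_eq_col]
  have hch := cheb_le y (fun j => -(colPayoff R x j))
    (fun j => Real.exp (-(ξ * colPayoff R x j))) hy.1 hy.2 (fun j => Real.exp_pos _) ?_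
  · have e1 : ∑ j, y j * -(colPayoff R x j) = -∑ j, y j * colPayoff R x j := by
      rw [← Finset.sum_neg_distrib]
      exact Finset.sum_congr rfl fun j _ => by ring
    have e2 : ∑ j, y j * Real.exp (-(ξ * colPayoff R x j)) * -(colPayoff R x j)
        = -∑ j, y j * Real.exp (-(ξ * colPayoff R x j)) * colPayoff R x j := by
      rw [← Finset.sum_neg_distrib]
      exact Finset.sum_congr rfl fun j _ => by ring
    rw [e1, e2, neg_div] at hch
    linarith
  · intro i j
    rcases le_total (colPayoff R x i) (colPayoff R x j) with h | h
    · have := Real.exp_le_exp.2 (show -(ξ * colPayoff R x j) ≤ -(ξ * colPayoff R x i) by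
        have := mul_le_mul_of_nonneg_left h hξ; linarith)
      nlinarith
    · have := Real.exp_le_exp.2 (show -(ξ * colPayoff R x i) ≤ -(ξ * colPayoff R x j) by
        have := mul_le_mul_of_nonneg_left h hξ; linarith)
      nlinarith

private lemma flbr_combine (R : Matrix (Fin n) (Fin n) ℝ)
    (hR : ∀ i j, 0 < R i j ∧ R i j ≤ 1)
    (xs ys : Fin n → ℝ) (hNash : IsNash R xs ys)
    (ε η : ℝ) (hη0 : 0 < η) (hη2 : η ≤ 1 / 2)
    (x y : Fin n → ℝ) (hx : IsProbVec x) (hy : IsProbVec y)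
    (hxm : FullyMixed x) (hym : FullyMixed y) (ξ : ℝ) (hξ0 : 0 ≤ ξ)
    (hdev : payoff R x (brY ξ R x y) - payoff R (brX ξ R x y) y ≤ -ε + η) :
    klProfile xs ys (mwuX η R x (brY ξ R x y)) (mwuY η R y (brX ξ R x y))
      ≤ klProfile xs ys x y - (η * ε - 4 * η ^ 2) := by
  obtain ⟨hxs, hys, hNr, hNc⟩ := hNash
  set yh := brY ξ R x y with hyhdef
  set xh := brX ξ R x y with hxhdef
  have hyhp := brY_prob ξ R x y hy hym
  have hxhp := brX_prob ξ R x y hx hxm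
  have hg := rowPayoff_mem R hR yh hyhp.1
  have hc := colPayoff_mem R hR xh hxhp.1
  -- row player KL step
  have hklx : klDiv xs (mwuX η R x yh)
      ≤ klDiv xs x - η * payoff R xs yh + η * payoff R x yh + η ^ 2 := by
    have hts : ∀ i, |η * rowPayoff R yh i| ≤ 1 := by
      intro i
      rw [abs_of_nonneg (mul_nonneg hη0.le (hg i).1)]
      nlinarith [(hg i).2, (hg i).1]
    have htB : ∀ i, (η * rowPayoff R yh i) ^ 2 ≤ η ^ 2 := by
      intro i
      rw [mul_pow]
      have hsq : rowPayoff R yh i ^ 2 ≤ 1 := by nlinarith [(hg i).2, (hg i).1]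
      nlinarith [mul_le_mul_of_nonneg_left hsq (sq_nonneg η)]
    have h := gibbs_kl xs x (fun i => η * rowPayoff R yh i) hxs.1 hxs.2 hxm hx.2
      hts (η ^ 2) htB
    have e1 : ∑ i, xs i * (η * rowPayoff R yh i) = η * payoff R xs yh := by
      rw [payoff_eq_row, Finset.mul_sum]
      exact Finset.sum_congr rfl fun i _ => by ring
    have e2 : ∑ i, x i * (η * rowPayoff R yh i) = η * payoff R x yh := by
      rw [payoff_eq_row, Finset.mul_sum]
      exact Finset.sum_congr rfl fun i _ => by ring
    rw [e1, e2] at h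
    have hEq : klDiv xs (mwuX η R x yh)
        = ∑ i, xs i * Real.log (xs i / (x i * Real.exp (η * rowPayoff R yh i)
            / ∑ j, x j * Real.exp (η * rowPayoff R yh j))) := rfl
    have hEq2 : klDiv xs x = ∑ i, xs i * Real.log (xs i / x i) := rfl
    rw [hEq, hEq2]
    linarith [h]
  -- column player KL step
  have hkly : klDiv ys (mwuY η R y xh)
      ≤ klDiv ys y + η * payoff R xh ys - η * payoff R xh y + η ^ 2 := by
    have hts : ∀ j, |(-(η * colPayoff R xh j))| ≤ 1 := by
      intro j
      rw [abs_neg, abs_of_nonneg (mul_nonneg hη0.le (hc j).1)]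
      nlinarith [(hc j).2, (hc j).1]
    have htB : ∀ j, (-(η * colPayoff R xh j)) ^ 2 ≤ η ^ 2 := by
      intro j
      rw [neg_pow, mul_pow]
      have hsq : colPayoff R xh j ^ 2 ≤ 1 := by nlinarith [(hc j).2, (hc j).1]
      nlinarith [mul_le_mul_of_nonneg_left hsq (sq_nonneg η)]
    have h := gibbs_kl ys y (fun j => -(η * colPayoff R xh j)) hys.1 hys.2 hym hy.2
      hts (η ^ 2) htB
    have e1 : ∑ j, ys j * (-(η * colPayoff R xh j)) = -(η * payoff R xh ys) := by
      rw [payoff_eq_col, Finset.mul_sum, ← Finset.sum_neg_distrib]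
      exact Finset.sum_congr rfl fun j _ => by ring
    have e2 : ∑ j, y j * (-(η * colPayoff R xh j)) = -(η * payoff R xh y) := by
      rw [payoff_eq_col, Finset.mul_sum, ← Finset.sum_neg_distrib]
      exact Finset.sum_congr rfl fun j _ => by ring
    rw [e1, e2] at h
    have hEq : klDiv ys (mwuY η R y xh)
        = ∑ j, ys j * Real.log (ys j / (y j * Real.exp (-(η * colPayoff R xh j))
            / ∑ k, y k * Real.exp (-(η * colPayoff R xh k)))) := rfl
    have hEq2 : klDiv ys y = ∑ j, ys j * Real.log (ys j / y j) := rfl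
    rw [hEq, hEq2]
    linarith [h]
  -- Nash inequalities
  have hN1 : payoff R xh ys ≤ payoff R xs ys := by
    rw [payoff_eq_row R xh ys]
    calc ∑ i, xh i * rowPayoff R ys i ≤ ∑ i, xh i * payoff R xs ys :=
          Finset.sum_le_sum fun i _ =>
            mul_le_mul_of_nonneg_left (hNr i) (hxhp.1.1 i)
      _ = payoff R xs ys := by rw [← Finset.sum_mul, hxhp.1.2, one_mul]
  have hN2 : payoff R xs ys ≤ payoff R xs yh := by
    rw [payoff_eq_col R xs yh]
    calc payoff R xs ys = ∑ j, yh j * payoff R xs ys := by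
          rw [← Finset.sum_mul, hyhp.1.2, one_mul]
      _ ≤ ∑ j, yh j * colPayoff R xs j :=
          Finset.sum_le_sum fun j _ =>
            mul_le_mul_of_nonneg_left (hNc j) (hyhp.1.1 j)
  -- combine
  have hdevη : η * (payoff R x yh - payoff R xh y) ≤ η * (-ε + η) :=
    mul_le_mul_of_nonneg_left hdev hη0.le
  have hNη : η * payoff R xh ys ≤ η * payoff R xs yh :=
    mul_le_mul_of_nonneg_left (le_trans hN1 hN2) hη0.le
  unfold klProfile
  nlinarith [hklx, hkly, hdevη, hNη, sq_nonneg η]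

end FLBRAux

/-- If the fully mixed profile `(x, y)` is not an `ε`-Nash equilibrium, then
for all large enough `ξ`, one FLBR-MWU step decreases the KL divergence from the Nash
equilibrium `(xs, ys)` by at least `ηε − 4η²`. -/
theorem flbr_kl_decrease_eps {n : ℕ} (R : Matrix (Fin n) (Fin n) ℝ)
    (hR : ∀ i j, 0 < R i j ∧ R i j ≤ 1)
    (xs ys : Fin n → ℝ) (hNash : IsNash R xs ys)
    (ε : ℝ) (hε : 0 < ε) (η : ℝ) (hη : η ∈ Set.Ioc (0 : ℝ) (1 / 2))
    (x y : Fin n → ℝ) (hx : IsProbVec x) (hy : IsProbVec y)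
    (hxm : FullyMixed x) (hym : FullyMixed y)
    (hnot : ¬ IsEpsNash R x y ε) :
    ∃ ξ₀ > (0 : ℝ), ∀ ξ ≥ ξ₀,
      klProfile xs ys (flbrStep η ξ R (x, y)).1 (flbrStep η ξ R (x, y)).2
        ≤ klProfile xs ys x y - (η * ε - 4 * η ^ 2) := by
  obtain ⟨hη0, hη2⟩ := hη
  simp only [IsEpsNash, not_and_or] at hnot
  rcases hnot with h | h
  · push_neg at h
    obtain ⟨i0, hi0⟩ := h
    refine ⟨max 1 (Real.log (1 / (x i0 * η)) / η),
      lt_of_lt_of_le zero_lt_one (le_max_left _ _), fun ξ hξ => ?_⟩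
    have hξ1 : (1 : ℝ) ≤ ξ := le_trans (le_max_left _ _) hξ
    have hξ0 : (0 : ℝ) ≤ ξ := by linarith
    have hcond : Real.exp (-(ξ * η)) ≤ x i0 * η := by
      have hpos : 0 < x i0 * η := mul_pos (hxm i0) hη0
      have h1 : Real.log (1 / (x i0 * η)) / η ≤ ξ := le_trans (le_max_right _ _) hξ
      have h2 : Real.log (1 / (x i0 * η)) ≤ ξ * η := by
        rw [div_le_iff₀ hη0] at h1; linarith
      rw [one_div, Real.log_inv] at h2
      calc Real.exp (-(ξ * η)) ≤ Real.exp (Real.log (x i0 * η)) :=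
            Real.exp_le_exp.2 (by linarith)
        _ = x i0 * η := Real.exp_log hpos
    have hsm : rowPayoff R y i0 - η ≤ payoff R (brX ξ R x y) y := by
      rw [payoff_brX_val]
      exact softmax_lb x (rowPayoff R y) hxm hx.2 (rowPayoff_mem R hR y hy) i0 η ξ hη0 hξ0 hcond
    have hble := payoff_brY_le ξ hξ0 R x y hy
    have hdev : payoff R x (brY ξ R x y) - payoff R (brX ξ R x y) y ≤ -ε + η := by
      linarith [hi0]
    have hmain := flbr_combine R hR xs ys hNash ε η hη0 hη2 x y hx hy hxm hym ξ hξ0 hdev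
    simpa [flbrStep] using hmain
  · push_neg at h
    obtain ⟨j0, hj0⟩ := h
    refine ⟨max 1 (Real.log (1 / (y j0 * η)) / η),
      lt_of_lt_of_le zero_lt_one (le_max_left _ _), fun ξ hξ => ?_⟩
    have hξ1 : (1 : ℝ) ≤ ξ := le_trans (le_max_left _ _) hξ
    have hξ0 : (0 : ℝ) ≤ ξ := by linarith
    have hcond : Real.exp (-(ξ * η)) ≤ y j0 * η := by
      have hpos : 0 < y j0 * η := mul_pos (hym j0) hη0
      have h1 : Real.log (1 / (y j0 * η)) / η ≤ ξ := le_trans (le_max_right _ _) hξ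
      have h2 : Real.log (1 / (y j0 * η)) ≤ ξ * η := by
        rw [div_le_iff₀ hη0] at h1; linarith
      rw [one_div, Real.log_inv] at h2
      calc Real.exp (-(ξ * η)) ≤ Real.exp (Real.log (y j0 * η)) :=
            Real.exp_le_exp.2 (by linarith)
        _ = y j0 * η := Real.exp_log hpos
    have hsm : payoff R x (brY ξ R x y) ≤ colPayoff R x j0 + η := by
      rw [payoff_brY_val]
      exact softmin_ub y (colPayoff R x) hym hy.2 (colPayoff_mem R hR x hx) j0 η ξ hη0 hξ0 hcond
    have hbge := payoff_brX_ge ξ hξ0 R x y hx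
    have hdev : payoff R x (brY ξ R x y) - payoff R (brX ξ R x y) y ≤ -ε + η := by
      linarith [hj0]
    have hmain := flbr_combine R hR xs ys hNash ε η hη0 hη2 x y hx hy hxm hym ξ hξ0 hdev
    simpa [flbrStep] using hmain
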